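/- General group-level identity under an orthonormal design: assume X^T X = I_p and let β̂^{ols} = X^T y. Then any minimizer β̂ of the LES objective Q satisfies, for every group k, Σ_{j=1}^{p_k} |β̂_{kj}| = Σ_{j : β̂_{kj} ≠ 0} |β̂^{ols}_{kj}| − nλα w_k · ( Σ_{j : β̂_{kj} ≠ 0} exp(α|β̂_{kj}|) ) / ( Σ_{l=1}^{p_k} exp(α|β̂_{kl}|) ). -/

import Mathlib

/-!
Under `XᵀX = I` the residual sum of squares is `‖β - β̂ᵒˡˢ‖²` plus a constant, so along the `(k, j)`
coordinate line through `β̂` the objective is, up to a constant,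
`t ↦ (t - β̂ᵒˡˢ_kj)² / (2n) + λ w_k log (exp (α |t|) + R)`, where `R` collects the other exponentials
of group `k`. If `β̂_kj ≠ 0` this is differentiable at its minimum `β̂_kj`, and the vanishing
derivative gives `β̂ᵒˡˢ_kj = β̂_kj + sign β̂_kj · nλαw_k exp (α |β̂_kj|) / ∑_l exp (α |β̂_kl|)`.
Taking absolute values and summing over the support of group `k` yields the identity.
-/

open Finset Function Real

theorem Finset.sum_apply_update_univ {κ M : Type*} {α : κ → Type*} [Fintype κ] [DecidableEq κ]
    [AddCommMonoid M] (F : ∀ j, α j → M) (β : ∀ j, α j) (i : κ) (t : α i) :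
    ∑ j, F j (update β i t j) = F i t + ∑ j ∈ univ.erase i, F j (β j) := by
  simp_rw [apply_update F, sum_update_of_mem (mem_univ i), sdiff_singleton_eq_erase]

theorem Finset.sum_sigma_update {K M α : Type*} {ι : K → Type*} [Fintype K] [DecidableEq K]
    [∀ k, DecidableEq (ι k)] [AddCommMonoid M] (F : ∀ l, (ι l → α) → M) (β : (Σ l, ι l) → α)
    (k : K) (j : ι k) (t : α) :
    ∑ l, F l (fun j' => update β ⟨k, j⟩ t ⟨l, j'⟩) =
      F k (update (fun j' => β ⟨k, j'⟩) j t) + ∑ l ∈ univ.erase k, F l (fun j' => β ⟨l, j'⟩) := by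
  change ∑ l, F l (Sigma.curry (γ := fun _ _ => α) (update β ⟨k, j⟩ t) l) = _
  rw [Sigma.curry_update]
  exact sum_apply_update_univ F _ _ _

section Orthonormal

variable {ι κ : Type*} [Fintype ι] [Fintype κ] {X : ι → κ → ℝ}

theorem sum_sq_mulVec_of_orthonormal [DecidableEq κ]
    (horth : ∀ j j', ∑ i, X i j * X i j' = if j = j' then 1 else 0) (β : κ → ℝ) :
    ∑ i, (∑ j, X i j * β j) ^ 2 = ∑ j, β j ^ 2 := by
  calc ∑ i, (∑ j, X i j * β j) ^ 2
      = ∑ j, ∑ j', β j * β j' * ∑ i, X i j * X i j' := by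
        simp_rw [sq, sum_mul_sum, mul_sum]
        rw [sum_comm]
        refine sum_congr rfl fun j _ => ?_
        rw [sum_comm]
        exact sum_congr rfl fun j' _ => sum_congr rfl fun i _ => by ring
    _ = ∑ j, β j ^ 2 := by simp [horth, sq]

theorem sum_mul_mulVec (y : ι → ℝ) (β : κ → ℝ) :
    ∑ i, y i * ∑ j, X i j * β j = ∑ j, (∑ i, X i j * y i) * β j := by
  simp_rw [mul_sum, sum_mul]
  rw [sum_comm]
  exact sum_congr rfl fun j _ => sum_congr rfl fun i _ => by ring

theorem sum_sq_sub_mulVec_of_orthonormal [DecidableEq κ]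
    (horth : ∀ j j', ∑ i, X i j * X i j' = if j = j' then 1 else 0) (y : ι → ℝ) (β : κ → ℝ) :
    ∑ i, (y i - ∑ j, X i j * β j) ^ 2 =
      ∑ i, y i ^ 2 - ∑ j, (∑ i, X i j * y i) ^ 2 + ∑ j, (β j - ∑ i, X i j * y i) ^ 2 := by
  simp only [sub_sq, sum_add_distrib, sum_sub_distrib, mul_assoc, ← mul_sum,
    sum_mul_mulVec y β, sum_sq_mulVec_of_orthonormal horth β]
  simp only [mul_comm (β _)]
  ring

end Orthonormal

theorem abs_add_sign_mul {b T : ℝ} (hb : b ≠ 0) (hT : 0 ≤ T) :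
    |b + SignType.sign b * T| = |b| + T := by
  rcases hb.lt_or_gt with hb | hb
  · rw [sign_neg hb, SignType.coe_neg_one, abs_of_neg hb, abs_of_neg (by linarith)]
    ring
  · rw [sign_pos hb, SignType.coe_one, abs_of_pos hb, abs_of_pos (by linarith), one_mul]

theorem hasDerivAt_log_exp_mul_abs_add {α R b : ℝ} (hR : 0 ≤ R) (hb : b ≠ 0) :
    HasDerivAt (fun t => log (exp (α * |t|) + R))
      (exp (α * |b|) * (α * SignType.sign b) / (exp (α * |b|) + R)) b :=
  (((hasDerivAt_abs hb).const_mul α).exp.add_const R).log (by positivity)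

theorem abs_eq_of_isLocalMin_sq_add_log_exp {σ μ α R b c : ℝ} (hσ : 0 < σ) (hμ : 0 ≤ μ)
    (hα : 0 ≤ α) (hR : 0 ≤ R) (hb : b ≠ 0)
    (hmin : IsLocalMin (fun t => 1 / (2 * σ) * (t - c) ^ 2 + μ * log (exp (α * |t|) + R)) b) :
    |c| = |b| + σ * μ * α * (exp (α * |b|) / (exp (α * |b|) + R)) := by
  have hD := ((((hasDerivAt_id b).sub_const c).pow 2).const_mul (1 / (2 * σ))).add
    ((hasDerivAt_log_exp_mul_abs_add (α := α) hR hb).const_mul μ)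
  have hcrit := hmin.hasDerivAt_eq_zero hD
  norm_num at hcrit
  have hc : c = b + SignType.sign b * (σ * μ * α * (exp (α * |b|) / (exp (α * |b|) + R))) := by
    field_simp at hcrit ⊢
    linear_combination -hcrit
  rw [hc, abs_add_sign_mul hb (by positivity)]

section LES

variable {n : ℕ} {K : Type*} {ι : K → Type*} [Fintype K] [∀ k, Fintype (ι k)]

noncomputable def lesObjective (X : Fin n → (Σ k, ι k) → ℝ) (y : Fin n → ℝ) (lam α : ℝ) (w : K → ℝ)
    (β : (Σ k, ι k) → ℝ) : ℝ :=
  (1 / (2 * (n : ℝ))) * ∑ i, (y i - ∑ j', X i j' * β j') ^ 2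
    + lam * ∑ l, w l * log (∑ j', exp (α * |β ⟨l, j'⟩|))

variable [DecidableEq K] [∀ k, DecidableEq (ι k)]

theorem lesObjective_update (X : Fin n → (Σ k, ι k) → ℝ) (y : Fin n → ℝ) (lam α : ℝ)
    (w : K → ℝ) (horth : ∀ j j', ∑ i, X i j * X i j' = if j = j' then 1 else 0)
    (β : (Σ k, ι k) → ℝ) (k : K) (j : ι k) (t : ℝ) :
    lesObjective X y lam α w (update β ⟨k, j⟩ t) =
      1 / (2 * (n : ℝ)) * (t - ∑ i, X i ⟨k, j⟩ * y i) ^ 2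
        + lam * w k * log (exp (α * |t|) + ∑ j' ∈ univ.erase j, exp (α * |β ⟨k, j'⟩|))
        + (1 / (2 * (n : ℝ)) * (∑ i, y i ^ 2 - ∑ j', (∑ i, X i j' * y i) ^ 2
              + ∑ j' ∈ univ.erase ⟨k, j⟩, (β j' - ∑ i, X i j' * y i) ^ 2)
          + lam * ∑ l ∈ univ.erase k, w l * log (∑ j', exp (α * |β ⟨l, j'⟩|))) := by
  have hrss : ∑ j', (update β ⟨k, j⟩ t j' - ∑ i, X i j' * y i) ^ 2 =
      (t - ∑ i, X i ⟨k, j⟩ * y i) ^ 2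
        + ∑ j' ∈ univ.erase ⟨k, j⟩, (β j' - ∑ i, X i j' * y i) ^ 2 :=
    sum_apply_update_univ (fun j' x => (x - ∑ i, X i j' * y i) ^ 2) β _ t
  have hgroup : ∑ j', exp (α * |update (fun j' => β ⟨k, j'⟩) j t j'|) =
      exp (α * |t|) + ∑ j' ∈ univ.erase j, exp (α * |β ⟨k, j'⟩|) :=
    sum_apply_update_univ (fun _ x => exp (α * |x|)) _ j t
  have hpen : ∑ l, w l * log (∑ j', exp (α * |update β ⟨k, j⟩ t ⟨l, j'⟩|)) =
      w k * log (∑ j', exp (α * |update (fun j' => β ⟨k, j'⟩) j t j'|))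
        + ∑ l ∈ univ.erase k, w l * log (∑ j', exp (α * |β ⟨l, j'⟩|)) :=
    sum_sigma_update (fun l v => w l * log (∑ j', exp (α * |v j'|))) β k j t
  rw [lesObjective, sum_sq_sub_mulVec_of_orthonormal horth, hrss, hpen, hgroup]
  ring

theorem abs_eq_abs_ols_sub_of_isMinOn_lesObjective (hn : 0 < n) {X : Fin n → (Σ k, ι k) → ℝ}
    {y : Fin n → ℝ} {lam α : ℝ} {w : K → ℝ}
    (horth : ∀ j j', ∑ i, X i j * X i j' = if j = j' then 1 else 0)
    (hlam : 0 ≤ lam) (hα : 0 ≤ α) {βh : (Σ k, ι k) → ℝ}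
    (hmin : IsMinOn (lesObjective X y lam α w) Set.univ βh) {k : K} (hw : 0 ≤ w k) {j : ι k}
    (hb : βh ⟨k, j⟩ ≠ 0) :
    |βh ⟨k, j⟩| = |∑ i, X i ⟨k, j⟩ * y i| - n * lam * α * w k *
      (exp (α * |βh ⟨k, j⟩|) / ∑ l, exp (α * |βh ⟨k, l⟩|)) := by
  set R := ∑ j' ∈ univ.erase j, exp (α * |βh ⟨k, j'⟩|)
  have hE : ∑ l, exp (α * |βh ⟨k, l⟩|) = exp (α * |βh ⟨k, j⟩|) + R :=
    (add_sum_erase _ _ (mem_univ j)).symm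
  have hline : IsLocalMin (fun t => 1 / (2 * (n : ℝ)) * (t - ∑ i, X i ⟨k, j⟩ * y i) ^ 2
      + lam * w k * log (exp (α * |t|) + R)) (βh ⟨k, j⟩) := by
    refine Filter.Eventually.of_forall fun t => ?_
    have hle := isMinOn_iff.mp hmin _ (Set.mem_univ (update βh ⟨k, j⟩ t))
    have hself := lesObjective_update X y lam α w horth βh k j (βh ⟨k, j⟩)
    rw [update_eq_self] at hself
    rw [hself, lesObjective_update X y lam α w horth] at hle
    dsimp only
    linarith
  rw [abs_eq_of_isLocalMin_sq_add_log_exp (by positivity) (mul_nonneg hlam hw) hα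
    (sum_nonneg fun _ _ => (exp_pos _).le) hb hline, hE]
  ring

end LES

theorem les_group_identity_general (n K : ℕ) (hn : 0 < n)
    (p : Fin K → ℕ)
    (X : Fin n → (Σ k : Fin K, Fin (p k)) → ℝ) (y : Fin n → ℝ)
    (horth : ∀ j j' : Σ k : Fin K, Fin (p k),
      ∑ i : Fin n, X i j * X i j' = if j = j' then 1 else 0)
    (βols : (Σ k : Fin K, Fin (p k)) → ℝ)
    (hols : ∀ j : Σ k : Fin K, Fin (p k), βols j = ∑ i : Fin n, X i j * y i)
    (lam α : ℝ) (hlam : 0 < lam) (hα : 0 < α)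
    (w : Fin K → ℝ) (hw : ∀ k, 0 ≤ w k)
    (βh : (Σ k : Fin K, Fin (p k)) → ℝ)
    (hmin : IsMinOn
      (fun β : (Σ k : Fin K, Fin (p k)) → ℝ =>
        (1 / (2 * (n : ℝ))) * ∑ i : Fin n, (y i - ∑ j' : Σ k : Fin K, Fin (p k), X i j' * β j') ^ 2
          + lam * ∑ l : Fin K, w l * Real.log (∑ j' : Fin (p l), Real.exp (α * |β ⟨l, j'⟩|)))
      Set.univ βh)
    (k : Fin K) (S : Finset (Fin (p k))) (hS : ∀ j, j ∈ S ↔ βh ⟨k, j⟩ ≠ 0) :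
    ∑ j : Fin (p k), |βh ⟨k, j⟩| =
      (∑ j ∈ S, |βols ⟨k, j⟩|) - (n : ℝ) * lam * α * w k *
        ((∑ j ∈ S, Real.exp (α * |βh ⟨k, j⟩|)) /
          (∑ l : Fin (p k), Real.exp (α * |βh ⟨k, l⟩|))) := by
  have hsupport : ∑ j, |βh ⟨k, j⟩| = ∑ j ∈ S, |βh ⟨k, j⟩| :=
    (sum_subset (subset_univ S) fun j _ hj => by
      rw [abs_eq_zero]; by_contra h; exact hj ((hS j).2 h)).symm
  have hcoord : ∀ j ∈ S, |βh ⟨k, j⟩| = |βols ⟨k, j⟩| - n * lam * α * w k *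
      (exp (α * |βh ⟨k, j⟩|) / ∑ l, exp (α * |βh ⟨k, l⟩|)) := fun j hj => by
    rw [hols]
    exact abs_eq_abs_ols_sub_of_isMinOn_lesObjective hn horth hlam.le hα.le hmin (hw k)
      ((hS j).1 hj)
  rw [hsupport, sum_congr rfl hcoord, sum_sub_distrib, ← mul_sum, ← sum_div]

/-- **General group-level identity under an orthonormal design.**
Assume `XᵀX = I` and let `β̂ᵒˡˢ = Xᵀ y`.  Then any minimizer `β̂` of the LES
objective `Q` satisfies, for every group `k`,
`∑ j, |β̂ kj| = ∑_{j : β̂ kj ≠ 0} |β̂ᵒˡˢ kj|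
  - n λ α w k * (∑_{j : β̂ kj ≠ 0} exp (α |β̂ kj|)) / (∑ l, exp (α |β̂ kl|))`. -/
theorem les_group_identity (n K : ℕ) (hn : 0 < n) (hK : 0 < K)
    (p : Fin K → ℕ) (hp : ∀ k, 1 ≤ p k)
    (X : Fin n → (Σ k : Fin K, Fin (p k)) → ℝ) (y : Fin n → ℝ)
    (horth : ∀ j j' : Σ k : Fin K, Fin (p k),
      ∑ i : Fin n, X i j * X i j' = if j = j' then 1 else 0)
    (βols : (Σ k : Fin K, Fin (p k)) → ℝ)
    (hols : ∀ j : Σ k : Fin K, Fin (p k), βols j = ∑ i : Fin n, X i j * y i)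
    (lam α : ℝ) (hlam : 0 < lam) (hα : 0 < α)
    (w : Fin K → ℝ) (hw : ∀ k, 0 ≤ w k)
    (βh : (Σ k : Fin K, Fin (p k)) → ℝ)
    (hmin : IsMinOn
      (fun β : (Σ k : Fin K, Fin (p k)) → ℝ =>
        (1 / (2 * (n : ℝ))) * ∑ i : Fin n, (y i - ∑ j' : Σ k : Fin K, Fin (p k), X i j' * β j') ^ 2
          + lam * ∑ l : Fin K, w l * Real.log (∑ j' : Fin (p l), Real.exp (α * |β ⟨l, j'⟩|)))
      Set.univ βh)
    (k : Fin K) (S : Finset (Fin (p k))) (hS : ∀ j, j ∈ S ↔ βh ⟨k, j⟩ ≠ 0) :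
    ∑ j : Fin (p k), |βh ⟨k, j⟩| =
      (∑ j ∈ S, |βols ⟨k, j⟩|) - (n : ℝ) * lam * α * w k *
        ((∑ j ∈ S, Real.exp (α * |βh ⟨k, j⟩|)) /
          (∑ l : Fin (p k), Real.exp (α * |βh ⟨k, l⟩|))) :=
  les_group_identity_general n K hn p X y horth βols hols lam α hlam hα w hw βh hmin k S hS
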